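/- For every real ν, every x > 0 and every t > 0, the Shu function satisfies the second differential relation -∂S_ν/∂x (x,t) + (ν/x)·S_ν(x,t) = S_{ν+1}(x,t), where ∂S_ν/∂x denotes the partial derivative with respect to x. -/

import Mathlib

open Real MeasureTheory

/-- The Shu function `S_ν(x,t) = (1/2)(x/2)^ν ∫_0^t τ^{-(ν+1)} e^{-τ - x²/(4τ)} dτ`. -/
noncomputable def shu (ν x t : ℝ) : ℝ :=
  (1/2) * (x/2) ^ ν * ∫ τ in (0:ℝ)..t, τ ^ (-(ν+1)) * Real.exp (-τ - x^2 / (4*τ))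

/-!
The `x`-derivative of the integrand of `S_ν` is `-(x/2)` times the integrand of `S_{ν+1}`, so
differentiating under the integral sign and by the product rule
`∂ₓ S_ν = (ν/x) S_ν - (1/2)(x/2)^{ν+1} ∫_0^t τ^{-(ν+2)} e^{-τ - x²/(4τ)} dτ = (ν/x) S_ν - S_{ν+1}`.
Differentiation under the integral is justified on the ball `|y - x| < x/2`, where the
derivative is dominated by a multiple of `τ^{-(ν+2)} e^{-x²/(16τ)}`; such functions are
integrable near `0` because `e^{-c/τ} ≤ n! (τ/c)^n` for every `n`.
-/

open Set

noncomputable def shuKernel (ν x τ : ℝ) : ℝ :=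
  τ ^ (-(ν+1)) * exp (-τ - x^2 / (4*τ))

lemma shu_eq_setIntegral (ν x : ℝ) {t : ℝ} (ht : 0 ≤ t) :
    shu ν x t = 1/2 * (x/2) ^ ν * ∫ τ in Ioc 0 t, shuKernel ν x τ := by
  rw [shu, intervalIntegral.integral_of_le ht]
  rfl

lemma rpow_mul_exp_neg_div_le (s : ℝ) {c τ : ℝ} (hc : 0 < c) (hτ : 0 < τ) (n : ℕ) :
    τ ^ s * exp (-(c/τ)) ≤ n.factorial / c^n * τ ^ (s + n) := by
  have hexp : exp (-(c/τ)) ≤ n.factorial * (τ/c)^n := by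
    rw [exp_neg, inv_le_comm₀ (exp_pos _) (by positivity)]
    calc ((n.factorial : ℝ) * (τ/c)^n)⁻¹ = (c/τ)^n / n.factorial := by
          rw [mul_inv, ← inv_pow, inv_div]; ring
      _ ≤ exp (c/τ) := pow_div_factorial_le_exp _ (div_pos hc hτ).le n
  calc τ ^ s * exp (-(c/τ)) ≤ τ ^ s * (n.factorial * (τ/c)^n) := by gcongr
    _ = n.factorial / c^n * τ ^ (s + n) := by
      rw [rpow_add hτ, rpow_natCast, div_pow]; ring

lemma integrableOn_rpow_mul_exp_neg_div (s : ℝ) {c : ℝ} (hc : 0 < c) (t : ℝ) :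
    IntegrableOn (fun τ => τ ^ s * exp (-(c/τ))) (Ioc 0 t) := by
  set n := ⌈-s⌉₊
  have hsn : -1 < s + n := by linarith [Nat.le_ceil (-s)]
  have hdom : IntegrableOn (fun τ => n.factorial / c^n * τ ^ (s + n)) (Ioc 0 t) :=
    ((intervalIntegral.intervalIntegrable_rpow' hsn).def'.mono_set Ioc_subset_uIoc).const_mul _
  have hcont : ContinuousOn (fun τ => τ ^ s * exp (-(c/τ))) (Ioc 0 t) := fun τ hτ => by
    have := hτ.1.ne'
    exact ContinuousAt.continuousWithinAt (by fun_prop (disch := simp [*]))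
  refine hdom.mono' (hcont.aestronglyMeasurable measurableSet_Ioc) ?_
  rw [ae_restrict_iff' measurableSet_Ioc]
  refine .of_forall fun τ hτ => ?_
  rw [norm_of_nonneg (by have := hτ.1; positivity)]
  exact rpow_mul_exp_neg_div_le s hc hτ.1 n

lemma continuousOn_shuKernel (ν x : ℝ) : ContinuousOn (shuKernel ν x) (Ioi 0) := fun τ hτ => by
  have : τ ≠ 0 := ne_of_gt hτ
  unfold shuKernel
  exact ContinuousAt.continuousWithinAt (by fun_prop (disch := simp [*]))

lemma norm_shuKernel_le {ν y c τ : ℝ} (hτ : 0 < τ) (hc : c ≤ y^2 / 4) :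
    ‖shuKernel ν y τ‖ ≤ τ ^ (-(ν+1)) * exp (-(c/τ)) := by
  unfold shuKernel
  rw [norm_of_nonneg (by positivity)]
  gcongr
  have : c / τ ≤ y^2 / (4*τ) := by
    rw [← div_div]
    gcongr
  linarith

lemma integrableOn_shuKernel (ν : ℝ) {x : ℝ} (hx : x ≠ 0) (t : ℝ) :
    IntegrableOn (shuKernel ν x) (Ioc 0 t) := by
  refine (integrableOn_rpow_mul_exp_neg_div (-(ν+1)) (c := x^2/4) (by positivity) t).mono'
    (((continuousOn_shuKernel ν x).mono Ioc_subset_Ioi_self).aestronglyMeasurable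
      measurableSet_Ioc) ?_
  rw [ae_restrict_iff' measurableSet_Ioc]
  exact .of_forall fun τ hτ => norm_shuKernel_le hτ.1 le_rfl

lemma hasDerivAt_shuKernel (ν y : ℝ) {τ : ℝ} (hτ : τ ≠ 0) :
    HasDerivAt (fun y => shuKernel ν y τ) (-(y/2) * shuKernel (ν+1) y τ) y := by
  have hexp : HasDerivAt (fun y => exp (-τ - y^2 / (4*τ)))
      (exp (-τ - y^2 / (4*τ)) * -(2*y / (4*τ))) y :=
    (((hasDerivAt_pow 2 y).div_const (4*τ)).const_sub (-τ)).exp.congr_deriv (by simp)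
  refine (hexp.const_mul (τ ^ (-(ν+1)))).congr_deriv ?_
  rw [shuKernel, show -(ν+1+1) = -(ν+1) - 1 by ring, rpow_sub_one hτ]
  field_simp
  ring

lemma hasDerivAt_setIntegral_shuKernel (ν t : ℝ) {x : ℝ} (hx : 0 < x) :
    HasDerivAt (fun y => ∫ τ in Ioc 0 t, shuKernel ν y τ)
      (-(x/2) * ∫ τ in Ioc 0 t, shuKernel (ν+1) x τ) x := by
  have hball : ∀ y ∈ Metric.ball x (x/2), x/2 < y ∧ y < 3*x/2 := fun y hy => by
    rw [Metric.mem_ball, Real.dist_eq, abs_lt] at hy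
    constructor <;> linarith
  have hmeas : ∀ ν y, AEStronglyMeasurable (shuKernel ν y) (volume.restrict (Ioc 0 t)) :=
    fun ν y => ((continuousOn_shuKernel ν y).mono Ioc_subset_Ioi_self).aestronglyMeasurable
      measurableSet_Ioc
  have hbound : ∀ᵐ τ ∂volume.restrict (Ioc 0 t), ∀ y ∈ Metric.ball x (x/2),
      ‖-(y/2) * shuKernel (ν+1) y τ‖ ≤ 3*x/4 * (τ ^ (-(ν+1+1)) * exp (-(x^2/16/τ))) := by
    rw [ae_restrict_iff' measurableSet_Ioc]
    refine .of_forall fun τ hτ y hy => ?_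
    obtain ⟨hy₁, hy₂⟩ := hball y hy
    rw [norm_mul, norm_neg, norm_of_nonneg (by linarith : 0 ≤ y/2)]
    exact mul_le_mul (by linarith) (norm_shuKernel_le hτ.1 (by nlinarith)) (norm_nonneg _)
      (by positivity)
  have hdiff : ∀ᵐ τ ∂volume.restrict (Ioc 0 t), ∀ y ∈ Metric.ball x (x/2),
      HasDerivAt (fun y => shuKernel ν y τ) (-(y/2) * shuKernel (ν+1) y τ) y := by
    rw [ae_restrict_iff' measurableSet_Ioc]
    exact .of_forall fun τ hτ y _ => hasDerivAt_shuKernel ν y hτ.1.ne'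
  have key := hasDerivAt_integral_of_dominated_loc_of_deriv_le
    (Metric.ball_mem_nhds x (half_pos hx)) (.of_forall (hmeas ν))
    (integrableOn_shuKernel ν hx.ne' t) ((hmeas (ν+1) x).const_mul _) hbound
    ((integrableOn_rpow_mul_exp_neg_div _ (by positivity) t).const_mul _) hdiff
  rw [← integral_const_mul]
  exact key.2

theorem stmt_9 (ν x t : ℝ) (hx : 0 < x) (ht : 0 < t) :
    -deriv (fun y => shu ν y t) x + (ν/x) * shu ν x t = shu (ν+1) x t := by
  have hpow : HasDerivAt (fun y => 1/2 * (y/2) ^ ν) (ν/x * (1/2 * (x/2) ^ ν)) x := by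
    refine ((((hasDerivAt_id' x).div_const 2).rpow_const (p := ν)
      (Or.inl (by positivity))).const_mul (1/2)).congr_deriv ?_
    rw [rpow_sub_one (by positivity)]
    field_simp
  have hshu : HasDerivAt (fun y => shu ν y t) (ν/x * (1/2 * (x/2) ^ ν) *
      (∫ τ in Ioc 0 t, shuKernel ν x τ) + 1/2 * (x/2) ^ ν *
      (-(x/2) * ∫ τ in Ioc 0 t, shuKernel (ν+1) x τ)) x := by
    simp only [shu_eq_setIntegral _ _ ht.le]
    exact hpow.mul (hasDerivAt_setIntegral_shuKernel ν t hx)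
  rw [hshu.deriv, shu_eq_setIntegral ν x ht.le, shu_eq_setIntegral (ν+1) x ht.le,
    rpow_add_one (by positivity)]
  ring
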